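/- For every integer n ≥ 3, every j ∈ {0, 1, …, 2n−1}, and every t ∈ ℝ, the quadrature weight W_j^{(n)}(t) equals the integral of the weakly singular kernel against the trigonometric Lagrange basis function: ∫₀^{2π} ln(4 sin²((t−ζ)/2)) sin²(t−ζ) 𝔏_j(ζ) dζ = W_j^{(n)}(t). -/

import Mathlib

open MeasureTheory intervalIntegral

/-- The collocation points ζ_j^{(n)} = πj/n. -/
noncomputable def zetaPt (n j : ℕ) : ℝ := Real.pi * j / n

/-- The trigonometric Lagrange basis function 𝔏_j. -/
noncomputable def lagrangeBasis (n j : ℕ) (t : ℝ) : ℝ :=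
  (1 / (2 * (n : ℝ))) *
    (1 + 2 * ∑ k ∈ Finset.Icc 1 (n - 1), Real.cos ((k : ℝ) * (t - zetaPt n j))
      + Real.cos ((n : ℝ) * (t - zetaPt n j)))

/-- The quadrature weight R_j^{(n)}(t). -/
noncomputable def Rweight (n j : ℕ) (t : ℝ) : ℝ :=
  -(2 * Real.pi / (n : ℝ)) *
      ∑ m ∈ Finset.Icc 1 (n - 1), (1 / (m : ℝ)) * Real.cos ((m : ℝ) * (t - zetaPt n j))
    - (Real.pi / (n : ℝ) ^ 2) * Real.cos ((n : ℝ) * (t - zetaPt n j))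

/-- The quadrature weight W_j^{(n)}(t). -/
noncomputable def Wweight (n j : ℕ) (t : ℝ) : ℝ :=
  (Real.pi / (n : ℝ)) *
      (1 / 4 + (2 / 3) * Real.cos (t - zetaPt n j) + (1 / 8) * Real.cos (2 * (t - zetaPt n j)))
    + (1 / 2) * Rweight n j t
    + (Real.pi / (n : ℝ)) *
        ∑ m ∈ Finset.Icc 3 (n - 1),
          ((m : ℝ) / ((m : ℝ) ^ 2 - 4)) * Real.cos ((m : ℝ) * (t - zetaPt n j))
    + (Real.pi / (2 * ((n : ℝ) ^ 2 - 4))) * Real.cos ((n : ℝ) * (t - zetaPt n j))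

open Real Finset

noncomputable def Lf (x : ℝ) : ℝ := Real.log (4 * Real.sin (x/2)^2)
noncomputable def Ff (x : ℝ) : ℝ := Lf x * Real.sin x ^ 2

lemma Lf_eq (x : ℝ) : Lf x = 2 * Real.log (2 * Real.sin (x/2)) := by
  rw [Lf, show (4:ℝ) * Real.sin (x/2)^2 = (2 * Real.sin (x/2))^2 by ring, Real.log_pow]
  push_cast; ring

lemma Lf_periodic : Function.Periodic Lf (2*Real.pi) := by
  intro x
  rw [Lf, Lf, show (x + 2*Real.pi)/2 = x/2 + Real.pi by ring, Real.sin_add_pi]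
  ring_nf

/-- E_k identity: sin(kx) = sin(x/2) * E_k(x). -/
noncomputable def Ek (k : ℕ) (x : ℝ) : ℝ := 2 * ∑ j ∈ Finset.range k, Real.cos ((2*(j:ℝ)+1) * (x/2))

lemma sin_nat_mul (k : ℕ) (x : ℝ) : Real.sin (k*x) = Real.sin (x/2) * Ek k x := by
  induction k with
  | zero => simp [Ek]
  | succ k ih =>
    have h := Real.sin_sub_sin (((k:ℝ)+1)*x) ((k:ℝ)*x)
    rw [show (((k:ℝ)+1)*x - (k:ℝ)*x)/2 = x/2 by ring,
      show (((k:ℝ)+1)*x + (k:ℝ)*x)/2 = (2*(k:ℝ)+1)*(x/2) by ring] at h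
    have : Real.sin (((k:ℝ)+1)*x) = Real.sin ((k:ℝ)*x) + 2*Real.sin (x/2)*Real.cos ((2*(k:ℝ)+1)*(x/2)) := by
      linarith
    push_cast
    rw [this, ih, Ek, Ek, Finset.sum_range_succ]
    ring

noncomputable def Dk (k : ℕ) (x : ℝ) : ℝ :=
  ∑ j ∈ Finset.range k, (Real.cos ((j:ℝ)*x) + Real.cos (((j:ℝ)+1)*x))

lemma cos_half_mul_sin (k : ℕ) (x : ℝ) :
    Real.cos (x/2) * Real.sin ((k:ℝ)*x) = Real.sin (x/2) * Dk k x := by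
  induction k with
  | zero => simp [Dk]
  | succ k ih =>
    have h := Real.sin_sub_sin (((k:ℝ)+1)*x) ((k:ℝ)*x)
    rw [show (((k:ℝ)+1)*x - (k:ℝ)*x)/2 = x/2 by ring,
      show (((k:ℝ)+1)*x + (k:ℝ)*x)/2 = (2*(k:ℝ)+1)*(x/2) by ring] at h
    have hc := Real.cos_add_cos ((k:ℝ)*x) (((k:ℝ)+1)*x)
    rw [show ((k:ℝ)*x + ((k:ℝ)+1)*x)/2 = (2*(k:ℝ)+1)*(x/2) by ring,
      show ((k:ℝ)*x - ((k:ℝ)+1)*x)/2 = -(x/2) by ring, Real.cos_neg] at hc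
    push_cast
    rw [Dk, Finset.sum_range_succ, ← Dk]
    push_cast
    linear_combination Real.cos (x/2) * h + ih - Real.sin (x/2) * hc

lemma cont_Lf_sin_half : Continuous (fun x => Lf x * Real.sin (x/2)) := by
  have : (fun x => Lf x * Real.sin (x/2))
      = (fun y => y * Real.log y) ∘ (fun x => 2 * Real.sin (x/2)) := by
    funext x
    simp only [Function.comp_apply, Lf_eq]
    ring
  rw [this]
  exact Real.continuous_mul_log.comp (by continuity)

lemma cont_Lf_sin_nat (k : ℕ) : Continuous (fun x => Lf x * Real.sin ((k:ℝ)*x)) := by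
  have : (fun x => Lf x * Real.sin ((k:ℝ)*x))
      = fun x => (Lf x * Real.sin (x/2)) * Ek k x := by
    funext x; rw [sin_nat_mul]; ring
  rw [this]
  exact (cont_Lf_sin_half.mul (by unfold Ek; continuity))

lemma cont_Ff : Continuous Ff := by
  have : Ff = fun x => (Lf x * Real.sin (x/2)) * (4 * Real.sin (x/2) * Real.cos (x/2)^2) := by
    funext x
    have hs : Real.sin x = 2 * Real.sin (x/2) * Real.cos (x/2) := by
      have := Real.sin_two_mul (x/2)
      rw [show 2*(x/2) = x by ring] at this
      exact this
    rw [Ff, hs]; ring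
  rw [this]
  exact cont_Lf_sin_half.mul (by continuity)

lemma hasDerivAt_Lf {x : ℝ} (hx : Real.sin (x/2) ≠ 0) :
    HasDerivAt Lf (Real.cos (x/2) / Real.sin (x/2)) x := by
  have hg : HasDerivAt (fun x : ℝ => 4 * Real.sin (x/2)^2)
      (4 * Real.sin (x/2) * Real.cos (x/2)) x := by
    have h1 : HasDerivAt (fun x : ℝ => x/2) (1/2) x := (hasDerivAt_id x).div_const 2
    have h2 := (Real.hasDerivAt_sin (x/2)).comp x h1
    have h3 := ((h2.pow 2).const_mul (4:ℝ))
    refine HasDerivAt.congr_deriv h3 ?_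
    symm
    simp [Function.comp]
    ring
  have hne : 4 * Real.sin (x/2)^2 ≠ 0 := by positivity
  have := (Real.hasDerivAt_log hne).comp x hg
  refine HasDerivAt.congr_deriv this ?_
  symm
  field_simp

noncomputable def qf (j : ℕ) (x : ℝ) : ℝ := if j = 0 then x else Real.sin ((j:ℝ)*x)/j

lemma hasDerivAt_qf (j : ℕ) (x : ℝ) : HasDerivAt (qf j) (Real.cos ((j:ℝ)*x)) x := by
  rcases Nat.eq_zero_or_pos j with h | h
  · subst h; 
    have : qf 0 = fun x : ℝ => x := by funext y; simp [qf]
    rw [this]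
    simpa using hasDerivAt_id' x
  · have hj : (j:ℝ) ≠ 0 := Nat.cast_ne_zero.2 h.ne'
    have h1 : HasDerivAt (fun x : ℝ => (j:ℝ)*x) (j:ℝ) x := by
      simpa using (hasDerivAt_id x).const_mul (j:ℝ)
    have h2 := ((Real.hasDerivAt_sin ((j:ℝ)*x)).comp x h1).div_const (j:ℝ)
    have he : qf j = fun x => Real.sin ((j:ℝ)*x)/j := by
      funext y; simp [qf, h.ne']
    rw [he]
    rw [show Real.cos ((j:ℝ)*x) = Real.cos ((j:ℝ)*x) * (j:ℝ)/(j:ℝ) by field_simp]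
    exact h2

lemma qf_zero (j : ℕ) : qf j 0 = 0 := by simp [qf]

lemma qf_two_pi (j : ℕ) : qf j (2*Real.pi) = if j = 0 then 2*Real.pi else 0 := by
  rcases Nat.eq_zero_or_pos j with h | h
  · simp [qf, h]
  · have : Real.sin ((j:ℝ)*(2*Real.pi)) = 0 := by
      have := Real.sin_nat_mul_pi (2*j)
      push_cast at this ⊢
      rw [show (j:ℝ)*(2*Real.pi) = 2*(j:ℝ)*Real.pi by ring]
      exact this
    simp [qf, h.ne', this]

noncomputable def Qk (k : ℕ) (x : ℝ) : ℝ := ∑ j ∈ Finset.range k, (qf j x + qf (j+1) x)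

lemma hasDerivAt_Qk (k : ℕ) (x : ℝ) : HasDerivAt (Qk k) (Dk k x) x := by
  unfold Qk Dk
  apply HasDerivAt.fun_sum
  intro j _
  have h1 := hasDerivAt_qf j x
  have h2 := hasDerivAt_qf (j+1) x
  push_cast at h2 ⊢
  exact h1.add h2

lemma Qk_zero (k : ℕ) : Qk k 0 = 0 := by
  unfold Qk
  apply Finset.sum_eq_zero
  intro j _
  simp [qf_zero]

lemma Qk_two_pi (k : ℕ) (hk : 1 ≤ k) : Qk k (2*Real.pi) = 2*Real.pi := by
  unfold Qk
  have : ∀ j ∈ Finset.range k, qf j (2*Real.pi) + qf (j+1) (2*Real.pi)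
      = if j = 0 then 2*Real.pi else 0 := by
    intro j _
    rw [qf_two_pi, qf_two_pi]
    rcases Nat.eq_zero_or_pos j with h | h
    · simp [h]
    · simp [h.ne']
  rw [Finset.sum_congr rfl this, Finset.sum_ite_eq' (Finset.range k) 0 (fun _ => 2*Real.pi)]
  simp [Nat.pos_iff_ne_zero.1 hk, hk]

lemma Lf_zero : Lf 0 = 0 := by simp [Lf]
lemma Lf_two_pi : Lf (2*Real.pi) = 0 := by
  rw [Lf, show 2*Real.pi/2 = Real.pi by ring]
  simp

lemma sin_nat_two_pi (k : ℕ) : Real.sin ((k:ℝ)*(2*Real.pi)) = 0 := by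
  have := Real.sin_nat_mul_pi (2*k)
  push_cast at this
  rw [show (k:ℝ)*(2*Real.pi) = 2*(k:ℝ)*Real.pi by ring]
  exact this

lemma coreFTC (m k₁ k₂ k₃ : ℕ) (h₁ : 1 ≤ k₁) (h₂ : 1 ≤ k₂) (h₃ : 1 ≤ k₃) (a₁ a₂ a₃ : ℝ)
    (hid : ∀ x : ℝ, Real.sin x ^ 2 * Real.cos ((m:ℝ)*x)
      = a₁*k₁*Real.cos ((k₁:ℝ)*x) + a₂*k₂*Real.cos ((k₂:ℝ)*x) + a₃*k₃*Real.cos ((k₃:ℝ)*x)) :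
    ∫ x in (0:ℝ)..(2*Real.pi), Ff x * Real.cos ((m:ℝ)*x) = -(2*Real.pi)*(a₁+a₂+a₃) := by
  set A : ℝ → ℝ := fun x => Lf x * (a₁ * Real.sin ((k₁:ℝ)*x) + a₂ * Real.sin ((k₂:ℝ)*x)
      + a₃ * Real.sin ((k₃:ℝ)*x)) - (a₁ * Qk k₁ x + a₂ * Qk k₂ x + a₃ * Qk k₃ x) with hA
  have hcont : ContinuousOn A (Set.Icc 0 (2*Real.pi)) := by
    apply Continuous.continuousOn
    apply Continuous.sub
    · have : (fun x => Lf x * (a₁ * Real.sin ((k₁:ℝ)*x) + a₂ * Real.sin ((k₂:ℝ)*x)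
          + a₃ * Real.sin ((k₃:ℝ)*x)))
        = fun x => a₁ * (Lf x * Real.sin ((k₁:ℝ)*x)) + a₂ * (Lf x * Real.sin ((k₂:ℝ)*x))
          + a₃ * (Lf x * Real.sin ((k₃:ℝ)*x)) := by funext x; ring
      rw [this]
      exact ((continuous_const.mul (cont_Lf_sin_nat k₁)).add
        (continuous_const.mul (cont_Lf_sin_nat k₂))).add
        (continuous_const.mul (cont_Lf_sin_nat k₃))
    · have hq : ∀ k : ℕ, Continuous (Qk k) := by
        intro k
        unfold Qk
        apply continuous_finset_sum
        intro j _
        apply Continuous.add <;>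
        · unfold qf
          split <;> continuity
      exact ((continuous_const.mul (hq k₁)).add (continuous_const.mul (hq k₂))).add
        (continuous_const.mul (hq k₃))
  have hderiv : ∀ x ∈ Set.Ioo (0:ℝ) (2*Real.pi),
      HasDerivAt A (Ff x * Real.cos ((m:ℝ)*x)) x := by
    intro x hx
    have hs : 0 < Real.sin (x/2) := by
      apply Real.sin_pos_of_pos_of_lt_pi <;> [linarith [hx.1]; linarith [hx.2, Real.pi_pos]]
    have hL := hasDerivAt_Lf hs.ne'
    have hsin : ∀ k : ℕ, HasDerivAt (fun x => Real.sin ((k:ℝ)*x)) (Real.cos ((k:ℝ)*x) * (k:ℝ)) x := by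
      intro k
      have h1 : HasDerivAt (fun x : ℝ => (k:ℝ)*x) (k:ℝ) x := by
        simpa using (hasDerivAt_id x).const_mul (k:ℝ)
      exact (Real.hasDerivAt_sin ((k:ℝ)*x)).comp x h1
    have hS : HasDerivAt (fun x => a₁ * Real.sin ((k₁:ℝ)*x) + a₂ * Real.sin ((k₂:ℝ)*x)
        + a₃ * Real.sin ((k₃:ℝ)*x))
        (a₁ * (Real.cos ((k₁:ℝ)*x) * (k₁:ℝ)) + a₂ * (Real.cos ((k₂:ℝ)*x) * (k₂:ℝ))
          + a₃ * (Real.cos ((k₃:ℝ)*x) * (k₃:ℝ))) x :=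
      (((hsin k₁).const_mul a₁).add ((hsin k₂).const_mul a₂)).add ((hsin k₃).const_mul a₃)
    have hQ : HasDerivAt (fun x => a₁ * Qk k₁ x + a₂ * Qk k₂ x + a₃ * Qk k₃ x)
        (a₁ * Dk k₁ x + a₂ * Dk k₂ x + a₃ * Dk k₃ x) x :=
      ((((hasDerivAt_Qk k₁ x).const_mul a₁).add ((hasDerivAt_Qk k₂ x).const_mul a₂)).add
        ((hasDerivAt_Qk k₃ x).const_mul a₃))
    have hAd := (hL.mul hS).sub hQ
    refine HasDerivAt.congr_deriv hAd ?_
    symm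
    have hD : ∀ k : ℕ, Real.cos (x/2) / Real.sin (x/2) * Real.sin ((k:ℝ)*x) = Dk k x := by
      intro k
      rw [div_mul_eq_mul_div, cos_half_mul_sin, mul_div_assoc, mul_comm]
      field_simp
    have e1 := hD k₁; have e2 := hD k₂; have e3 := hD k₃
    have hFf : Ff x * Real.cos ((m:ℝ)*x) = Lf x * (Real.sin x ^2 * Real.cos ((m:ℝ)*x)) := by
      rw [Ff]; ring
    rw [hFf, hid x]
    linear_combination (-a₁) * e1 + (-a₂) * e2 + (-a₃) * e3
  have hint : IntervalIntegrable (fun x => Ff x * Real.cos ((m:ℝ)*x)) volume 0 (2*Real.pi) :=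
    (cont_Ff.mul (Real.continuous_cos.comp (continuous_const.mul continuous_id))).intervalIntegrable _ _
  have := intervalIntegral.integral_eq_sub_of_hasDerivAt_of_le
    (by positivity) hcont hderiv hint
  rw [this, hA]
  simp only [Lf_zero, Lf_two_pi, Qk_zero, Qk_two_pi k₁ h₁, Qk_two_pi k₂ h₂, Qk_two_pi k₃ h₃,
    sin_nat_two_pi]
  ring

noncomputable def JC (m : ℕ) : ℝ := ∫ x in (0:ℝ)..(2*Real.pi), Ff x * Real.cos ((m:ℝ)*x)

lemma JC_ge3 (m : ℕ) (hm : 3 ≤ m) :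
    JC m = -Real.pi/m + Real.pi*m/((m:ℝ)^2-4) := by
  have hm0 : (m:ℝ) ≠ 0 := by positivity
  have hm2 : ((m:ℝ)-2) ≠ 0 := by
    have : (3:ℝ) ≤ (m:ℝ) := by exact_mod_cast hm
    linarith
  have hm2' : ((m:ℝ)+2) ≠ 0 := by positivity
  have hcast : ((m-2:ℕ):ℝ) = (m:ℝ)-2 := by
    have : 2 ≤ m := by omega
    push_cast [this]; ring
  have h := coreFTC m m (m+2) (m-2) (by omega) (by omega) (by omega)
    (1/(2*(m:ℝ))) (-1/(4*((m:ℝ)+2))) (-1/(4*((m:ℝ)-2))) ?_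
  · rw [JC, h]
    have hm4 : (m:ℝ)^2 - 4 ≠ 0 := by
      have : (m:ℝ)^2 - 4 = ((m:ℝ)-2)*((m:ℝ)+2) := by ring
      rw [this]; exact mul_ne_zero hm2 hm2'
    field_simp
    ring
  · intro x
    push_cast [hcast]
    have c1 : Real.cos (((m:ℝ)+2)*x) = Real.cos ((m:ℝ)*x)*Real.cos (2*x) - Real.sin ((m:ℝ)*x)*Real.sin (2*x) := by
      rw [show ((m:ℝ)+2)*x = (m:ℝ)*x + 2*x by ring, Real.cos_add]
    have c2 : Real.cos (((m:ℝ)-2)*x) = Real.cos ((m:ℝ)*x)*Real.cos (2*x) + Real.sin ((m:ℝ)*x)*Real.sin (2*x) := by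
      rw [show ((m:ℝ)-2)*x = (m:ℝ)*x - 2*x by ring, Real.cos_sub]
    rw [c1, c2, Real.cos_two_mul, Real.cos_sq']
    field_simp
    ring

lemma JC_1 : JC 1 = -Real.pi/3 := by
  have h := coreFTC 1 1 3 1 le_rfl (by omega) le_rfl (1/4) (-1/12) 0 ?_
  · rw [JC, h]; push_cast; ring
  · intro x
    push_cast
    have c3 : Real.cos (3*x) = Real.cos (2*x)*Real.cos x - Real.sin (2*x)*Real.sin x := by
      rw [show (3:ℝ)*x = 2*x + x by ring, Real.cos_add]
    rw [c3, Real.cos_two_mul, Real.sin_two_mul, Real.cos_sq']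
    ring

lemma cont_Ffcos (k : ℕ) : Continuous (fun x => Ff x * Real.cos ((k:ℝ)*x)) :=
  cont_Ff.mul (Real.continuous_cos.comp (continuous_const.mul continuous_id))

lemma intFfcos (k : ℕ) (a b : ℝ) :
    IntervalIntegrable (fun x => Ff x * Real.cos ((k:ℝ)*x)) volume a b :=
  (cont_Ffcos k).intervalIntegrable a b

lemma int_comb (k₀ k₁ k₂ : ℕ) (b₀ b₁ b₂ : ℝ) :
    ∫ x in (0:ℝ)..(2*Real.pi), Ff x * (b₀*Real.cos ((k₀:ℝ)*x) + b₁*Real.cos ((k₁:ℝ)*x)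
      + b₂*Real.cos ((k₂:ℝ)*x))
    = b₀ * JC k₀ + b₁ * JC k₁ + b₂ * JC k₂ := by
  have he : (fun x => Ff x * (b₀*Real.cos ((k₀:ℝ)*x) + b₁*Real.cos ((k₁:ℝ)*x)
      + b₂*Real.cos ((k₂:ℝ)*x)))
      = fun x => b₀*(Ff x * Real.cos ((k₀:ℝ)*x)) + b₁*(Ff x * Real.cos ((k₁:ℝ)*x))
        + b₂*(Ff x * Real.cos ((k₂:ℝ)*x)) := by funext x; ring
  rw [he, intervalIntegral.integral_add, intervalIntegral.integral_add,
    intervalIntegral.integral_const_mul, intervalIntegral.integral_const_mul,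
    intervalIntegral.integral_const_mul]
  · rfl
  · exact (intFfcos k₀ _ _).const_mul b₀
  · exact (intFfcos k₁ _ _).const_mul b₁
  · exact ((intFfcos k₀ _ _).const_mul b₀).add ((intFfcos k₁ _ _).const_mul b₁)
  · exact (intFfcos k₂ _ _).const_mul b₂

lemma Ff_periodic : Function.Periodic Ff (2*Real.pi) := by
  intro x
  rw [Ff, Ff, Lf_periodic x, Real.sin_add_two_pi]

lemma cos_nat_periodic (m : ℕ) (x : ℝ) : Real.cos ((m:ℝ)*(x + 2*Real.pi)) = Real.cos ((m:ℝ)*x) := by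
  rw [show (m:ℝ)*(x+2*Real.pi) = (m:ℝ)*x + (m:ℝ)*(2*Real.pi) by ring]
  exact Real.cos_add_nat_mul_two_pi _ m

lemma dup (m : ℕ) :
    JC m = 2 * ∫ x in (0:ℝ)..(2*Real.pi), Ff x * (4*Real.cos x^2*Real.cos (2*(m:ℝ)*x)) := by
  set g : ℝ → ℝ := fun u => Ff u * Real.cos ((m:ℝ)*u) with hg
  have hgper : Function.Periodic g (2*Real.pi) := by
    intro x
    simp only [hg, Ff_periodic x, cos_nat_periodic m x]
  -- step 1 : ∫₀^{2π} g(2x) dx = JC m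
  have h1 : ∫ x in (0:ℝ)..(2*Real.pi), g (2*x) = JC m := by
    rw [intervalIntegral.integral_comp_mul_left g two_ne_zero]
    have hsplit : ∫ u in ((2:ℝ)*0)..(2*(2*Real.pi)), g u
        = (∫ u in ((2:ℝ)*0)..(2*Real.pi), g u) + ∫ u in (2*Real.pi)..(2*(2*Real.pi)), g u := by
      rw [intervalIntegral.integral_add_adjacent_intervals]
      · exact ((cont_Ffcos m).intervalIntegrable _ _)
      · exact ((cont_Ffcos m).intervalIntegrable _ _)
    have hper2 : ∫ u in (2*Real.pi)..(2*(2*Real.pi)), g u = ∫ u in (0:ℝ)..(2*Real.pi), g u := by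
      have := hgper.intervalIntegral_add_eq (2*Real.pi) 0
      rw [show 2*Real.pi + 2*Real.pi = 2*(2*Real.pi) by ring, zero_add] at this
      exact this
    have hJC : JC m = ∫ u in (0:ℝ)..(2*Real.pi), g u := rfl
    rw [hsplit, hper2, hJC, show (2:ℝ)*0 = 0 by ring, smul_eq_mul]
    ring
  -- step 2 : pointwise duplication
  set h : ℝ → ℝ := fun u => Lf u * Real.sin (2*u)^2 * Real.cos (2*(m:ℝ)*u) with hh
  have dup_id : ∀ x : ℝ, g (2*x) = h x + h (x + Real.pi) := by
    intro x
    have e1 : Real.sin (2*(x+Real.pi)) = Real.sin (2*x) := by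
      rw [show 2*(x+Real.pi) = 2*x + 2*Real.pi by ring, Real.sin_add_two_pi]
    have e2 : Real.cos (2*(m:ℝ)*(x+Real.pi)) = Real.cos (2*(m:ℝ)*x) := by
      rw [show 2*(m:ℝ)*(x+Real.pi) = 2*(m:ℝ)*x + (m:ℝ)*(2*Real.pi) by ring]
      exact Real.cos_add_nat_mul_two_pi _ m
    have key : Lf (2*x) * Real.sin (2*x)^2 = (Lf x + Lf (x+Real.pi)) * Real.sin (2*x)^2 := by
      by_cases hs : Real.sin x = 0
      · have : Real.sin (2*x) = 0 := by rw [Real.sin_two_mul, hs]; ring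
        rw [this]; ring
      · have hsx : Real.sin x = 2*Real.sin (x/2)*Real.cos (x/2) := by
          have := Real.sin_two_mul (x/2)
          rw [show 2*(x/2) = x by ring] at this
          linarith
        have hs2 : Real.sin (x/2) ≠ 0 := fun h0 => hs (by rw [hsx, h0]; ring)
        have hc2 : Real.cos (x/2) ≠ 0 := fun h0 => hs (by rw [hsx, h0]; ring)
        have l1 : Lf (2*x) = 2*Real.log ((2*Real.sin (x/2))*(2*Real.cos (x/2))) := by
          rw [Lf_eq, show 2*x/2 = x by ring, hsx]
          ring_nf
        have l2 : Lf (x+Real.pi) = 2*Real.log (2*Real.cos (x/2)) := by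
          rw [Lf_eq, show (x+Real.pi)/2 = x/2 + Real.pi/2 by ring, Real.sin_add_pi_div_two]
        rw [l1, l2, Real.log_mul (by simpa using hs2) (by simpa using hc2), Lf_eq]
        ring
    simp only [hg, hh, Ff]
    rw [e1, e2, show (m:ℝ)*(2*x) = 2*(m:ℝ)*x by ring]
    linear_combination Real.cos (2*(m:ℝ)*x) * key
  -- continuity of h
  have hcont : Continuous h := by
    have : h = fun u => (Lf u * Real.sin (u/2)) *
        ((4*Real.sin (u/2)*Real.cos (u/2)^2) * (4*Real.cos u^2*Real.cos (2*(m:ℝ)*u))) := by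
      funext u
      have hsu : Real.sin u = 2*Real.sin (u/2)*Real.cos (u/2) := by
        have := Real.sin_two_mul (u/2)
        rw [show 2*(u/2) = u by ring] at this
        linarith
      simp only [hh]
      rw [Real.sin_two_mul, hsu]
      ring
    rw [this]
    apply cont_Lf_sin_half.mul
    apply Continuous.mul
    · fun_prop
    · fun_prop
  have hper : Function.Periodic h (2*Real.pi) := by
    intro x
    have e1 : Real.sin (2*(x+2*Real.pi)) = Real.sin (2*x) := by
      rw [show 2*(x+2*Real.pi) = 2*x + 2*Real.pi + 2*Real.pi by ring, Real.sin_add_two_pi,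
        Real.sin_add_two_pi]
    have e2 : Real.cos (2*(m:ℝ)*(x+2*Real.pi)) = Real.cos (2*(m:ℝ)*x) := by
      rw [show 2*(m:ℝ)*(x+2*Real.pi) = 2*(m:ℝ)*x + (2*m:ℕ)*(2*Real.pi) by push_cast; ring,
        Real.cos_add_nat_mul_two_pi]
    simp only [hh]
    rw [Lf_periodic x, e1, e2]
  -- step 3
  have h3 : ∫ x in (0:ℝ)..(2*Real.pi), g (2*x) = 2 * ∫ x in (0:ℝ)..(2*Real.pi), h x := by
    have : (fun x => g (2*x)) = fun x => h x + h (x + Real.pi) := funext dup_id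
    have i2 : IntervalIntegrable (fun x => h (x + Real.pi)) volume 0 (2*Real.pi) :=
      ((hcont.comp (continuous_id.add continuous_const) :
        Continuous fun x => h (x + Real.pi))).intervalIntegrable _ _
    rw [this, intervalIntegral.integral_add (hcont.intervalIntegrable _ _) i2]
    have h4 : ∫ x in (0:ℝ)..(2*Real.pi), h (x + Real.pi) = ∫ x in (0:ℝ)..(2*Real.pi), h x := by
      rw [intervalIntegral.integral_comp_add_right h Real.pi]
      have := hper.intervalIntegral_add_eq Real.pi 0
      rw [zero_add, show Real.pi + 2*Real.pi = 2*Real.pi + Real.pi by ring] at this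
      rw [show (0:ℝ) + Real.pi = Real.pi by ring]
      exact this
    rw [h4]
    ring
  rw [← h1, h3]
  have : (fun x => h x) = fun x => Ff x * (4*Real.cos x^2*Real.cos (2*(m:ℝ)*x)) := by
    funext x
    simp only [hh, Ff]
    rw [Real.sin_two_mul]
    ring
  rw [this]

lemma JC_vals : JC 0 = Real.pi/2 ∧ JC 2 = -(3*Real.pi/8) := by
  have d0 := dup 0
  have d1 := dup 1
  have f0 : (fun x => Ff x * (4*Real.cos x^2*Real.cos (2*((0:ℕ):ℝ)*x)))
      = fun x => Ff x * (2*Real.cos (((0:ℕ):ℝ)*x) + 2*Real.cos (((2:ℕ):ℝ)*x)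
        + 0*Real.cos (((0:ℕ):ℝ)*x)) := by
    funext x
    have c2 := Real.cos_two_mul x
    push_cast
    rw [show (2:ℝ)*0*x = 0 by ring, show (0:ℝ)*x = 0 by ring, Real.cos_zero, c2]
    ring
  have f1 : (fun x => Ff x * (4*Real.cos x^2*Real.cos (2*((1:ℕ):ℝ)*x)))
      = fun x => Ff x * (1*Real.cos (((0:ℕ):ℝ)*x) + 2*Real.cos (((2:ℕ):ℝ)*x)
        + 1*Real.cos (((4:ℕ):ℝ)*x)) := by
    funext x
    have c2 := Real.cos_two_mul x
    have c4 : Real.cos (4*x) = 2*Real.cos (2*x)^2 - 1 := by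
      rw [show (4:ℝ)*x = 2*(2*x) by ring, Real.cos_two_mul]
    push_cast
    rw [show (2:ℝ)*1*x = 2*x by ring, show (0:ℝ)*x = 0 by ring, Real.cos_zero, c4, c2]
    ring
  rw [f0, int_comb 0 2 0 2 2 0] at d0
  rw [f1, int_comb 0 2 4 1 2 1] at d1
  have hJ1 : JC 1 = -Real.pi/3 := JC_1
  have hJ4 : JC 4 = Real.pi/12 := by
    rw [JC_ge3 4 (by omega)]
    norm_num
    ring
  constructor <;> linarith

lemma cos_nat_two_pi (k : ℕ) : Real.cos ((k:ℝ)*(2*Real.pi)) = 1 := by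
  have := Real.cos_add_nat_mul_two_pi 0 k
  simpa using this

lemma JS (k : ℕ) : ∫ x in (0:ℝ)..(2*Real.pi), Ff x * Real.sin ((k:ℝ)*x) = 0 := by
  have hrefl := intervalIntegral.integral_comp_sub_left
    (a := (0:ℝ)) (b := 2*Real.pi) (fun x => Ff x * Real.sin ((k:ℝ)*x)) (2*Real.pi)
  have h2 : (fun x => Ff (2*Real.pi - x) * Real.sin ((k:ℝ)*(2*Real.pi - x)))
      = fun x => -(Ff x * Real.sin ((k:ℝ)*x)) := by
    funext x
    have hF : Ff (2*Real.pi - x) = Ff x := by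
      have hL : Lf (2*Real.pi - x) = Lf x := by
        rw [Lf, Lf, show (2*Real.pi - x)/2 = Real.pi - x/2 by ring, Real.sin_pi_sub]
      have hsin : Real.sin (2*Real.pi - x) = -Real.sin x := by
        rw [Real.sin_sub, Real.sin_two_pi, Real.cos_two_pi]
        ring
      rw [Ff, Ff, hL, hsin]
      ring
    have hs : Real.sin ((k:ℝ)*(2*Real.pi - x)) = -Real.sin ((k:ℝ)*x) := by
      rw [show (k:ℝ)*(2*Real.pi - x) = (k:ℝ)*(2*Real.pi) - (k:ℝ)*x by ring, Real.sin_sub,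
        sin_nat_two_pi, cos_nat_two_pi]
      ring
    rw [hF, hs]
    ring
  rw [h2] at hrefl
  simp only [sub_self, sub_zero] at hrefl
  rw [intervalIntegral.integral_neg] at hrefl
  linarith

lemma int_Ff_cos_shift (k : ℕ) (β : ℝ) :
    ∫ x in (0:ℝ)..(2*Real.pi), Ff x * Real.cos ((k:ℝ)*(β - x))
      = Real.cos ((k:ℝ)*β) * JC k := by
  have he : (fun x => Ff x * Real.cos ((k:ℝ)*(β - x)))
      = fun x => Real.cos ((k:ℝ)*β)*(Ff x * Real.cos ((k:ℝ)*x))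
        + Real.sin ((k:ℝ)*β)*(Ff x * Real.sin ((k:ℝ)*x)) := by
    funext x
    rw [show (k:ℝ)*(β - x) = (k:ℝ)*β - (k:ℝ)*x by ring, Real.cos_sub]
    ring
  have hintsin : IntervalIntegrable (fun x => Ff x * Real.sin ((k:ℝ)*x)) volume 0 (2*Real.pi) :=
    (cont_Ff.mul (by fun_prop)).intervalIntegrable _ _
  rw [he, intervalIntegral.integral_add ((intFfcos k _ _).const_mul _) (hintsin.const_mul _),
    intervalIntegral.integral_const_mul, intervalIntegral.integral_const_mul, JS k]
  rw [JC]
  ring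

lemma int_Ff_eq_JC0 : ∫ x in (0:ℝ)..(2*Real.pi), Ff x = JC 0 := by
  rw [JC]
  apply intervalIntegral.integral_congr
  intro x _
  norm_num

lemma main_expand (n : ℕ) (β : ℝ) :
    ∫ x in (0:ℝ)..(2*Real.pi), Ff x * ((1/(2*(n:ℝ)))
      * (1 + 2*∑ k ∈ Finset.Icc 1 (n-1), Real.cos ((k:ℝ)*(β - x))
        + Real.cos ((n:ℝ)*(β - x))))
    = (1/(2*(n:ℝ))) * (JC 0 + 2*∑ k ∈ Finset.Icc 1 (n-1), Real.cos ((k:ℝ)*β)*JC k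
        + Real.cos ((n:ℝ)*β)*JC n) := by
  have hsum_cont : ∀ k : ℕ, Continuous (fun x => Ff x * Real.cos ((k:ℝ)*(β - x))) := by
    intro k
    exact cont_Ff.mul (by fun_prop)
  have he : (fun x => Ff x * ((1/(2*(n:ℝ)))
      * (1 + 2*∑ k ∈ Finset.Icc 1 (n-1), Real.cos ((k:ℝ)*(β - x))
        + Real.cos ((n:ℝ)*(β - x)))))
      = fun x => (1/(2*(n:ℝ))) * ((Ff x
          + 2*∑ k ∈ Finset.Icc 1 (n-1), Ff x * Real.cos ((k:ℝ)*(β - x)))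
          + Ff x * Real.cos ((n:ℝ)*(β - x))) := by
    funext x
    rw [Finset.mul_sum (Finset.Icc 1 (n-1)) (fun k => Real.cos ((k:ℝ)*(β - x))) (Ff x) |>.symm]
    ring
  have hint1 : IntervalIntegrable
      (fun x => ∑ k ∈ Finset.Icc 1 (n-1), Ff x * Real.cos ((k:ℝ)*(β - x))) volume 0 (2*Real.pi) :=
    (continuous_finset_sum _ (fun k _ => hsum_cont k)).intervalIntegrable _ _
  rw [he, intervalIntegral.integral_const_mul,
    intervalIntegral.integral_add ((cont_Ff.intervalIntegrable _ _).add (hint1.const_mul 2))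
      (((hsum_cont n).intervalIntegrable _ _)),
    intervalIntegral.integral_add (cont_Ff.intervalIntegrable _ _) (hint1.const_mul 2),
    intervalIntegral.integral_const_mul,
    intervalIntegral.integral_finset_sum (fun k _ => ((hsum_cont k).intervalIntegrable _ _)),
    int_Ff_eq_JC0, int_Ff_cos_shift n β, Finset.sum_congr rfl (fun k _ => int_Ff_cos_shift k β)]

lemma lag_per (n j : ℕ) (y : ℝ) :
    lagrangeBasis n j (y - 2*Real.pi) = lagrangeBasis n j y := by
  have hc : ∀ k : ℕ, Real.cos ((k:ℝ)*(y - 2*Real.pi - zetaPt n j))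
      = Real.cos ((k:ℝ)*(y - zetaPt n j)) := by
    intro k
    rw [show (k:ℝ)*(y - 2*Real.pi - zetaPt n j)
        = (k:ℝ)*(y - zetaPt n j) - (k:ℝ)*(2*Real.pi) by ring, Real.cos_sub,
      sin_nat_two_pi, cos_nat_two_pi]
    ring
  simp only [lagrangeBasis, hc]

theorem stmt11 (n : ℕ) (hn : 3 ≤ n) (j : ℕ) (hj : j < 2 * n) (t : ℝ) :
    ∫ ζ in (0:ℝ)..(2 * Real.pi),
        Real.log (4 * Real.sin ((t - ζ) / 2) ^ 2) * Real.sin (t - ζ) ^ 2 * lagrangeBasis n j ζ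
      = Wweight n j t := by
  have hn0 : (n:ℝ) ≠ 0 := by positivity
  have hn3 : (3:ℝ) ≤ (n:ℝ) := by exact_mod_cast hn
  have hn4 : (n:ℝ)^2 - 4 ≠ 0 := by nlinarith
  set G : ℝ → ℝ := fun x => Ff x * lagrangeBasis n j (t - x) with hG
  have hstep0 : (fun ζ => Real.log (4 * Real.sin ((t - ζ) / 2) ^ 2) * Real.sin (t - ζ) ^ 2
      * lagrangeBasis n j ζ) = fun ζ => G (t - ζ) := by
    funext ζ
    simp only [hG, Ff, Lf]
    rw [show t - (t - ζ) = ζ by ring]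
  rw [hstep0, intervalIntegral.integral_comp_sub_left G t]
  have hGper : Function.Periodic G (2*Real.pi) := by
    intro x
    simp only [hG, Ff_periodic x]
    rw [show t - (x + 2*Real.pi) = (t - x) - 2*Real.pi by ring, lag_per]
  have hshift := hGper.intervalIntegral_add_eq (t - 2*Real.pi) 0
  rw [zero_add] at hshift
  rw [show t - (0:ℝ) = t - 2*Real.pi + 2*Real.pi by ring, hshift]
  have hG2 : G = fun x => Ff x * ((1/(2*(n:ℝ)))
      * (1 + 2*∑ k ∈ Finset.Icc 1 (n-1), Real.cos ((k:ℝ)*((t - zetaPt n j) - x))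
        + Real.cos ((n:ℝ)*((t - zetaPt n j) - x)))) := by
    funext x
    have harg : ∀ y : ℝ, t - x - y = (t - y) - x := fun y => by ring
    simp only [hG, lagrangeBasis, harg]
  rw [hG2, main_expand n (t - zetaPt n j)]
  obtain ⟨h0, h2v⟩ := JC_vals
  rw [h0, JC_ge3 n hn]
  have hicc : Finset.Icc 1 (n-1) = insert 1 (insert 2 (Finset.Icc 3 (n-1))) := by
    ext a
    simp only [Finset.mem_Icc, Finset.mem_insert]
    omega
  have h1m : (1:ℕ) ∉ insert 2 (Finset.Icc 3 (n-1)) := by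
    simp only [Finset.mem_insert, Finset.mem_Icc]
    omega
  have h2m : (2:ℕ) ∉ Finset.Icc 3 (n-1) := by
    simp only [Finset.mem_Icc]
    omega
  have hsum : ∑ k ∈ Finset.Icc 3 (n-1), Real.cos ((k:ℝ)*(t - zetaPt n j))*JC k
      = (-Real.pi) * (∑ k ∈ Finset.Icc 3 (n-1),
          (1/(k:ℝ)) * Real.cos ((k:ℝ)*(t - zetaPt n j)))
        + Real.pi * (∑ k ∈ Finset.Icc 3 (n-1),
          ((k:ℝ)/((k:ℝ)^2-4)) * Real.cos ((k:ℝ)*(t - zetaPt n j))) := by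
    have step : ∀ k ∈ Finset.Icc 3 (n-1), Real.cos ((k:ℝ)*(t - zetaPt n j))*JC k
        = (-Real.pi) * ((1/(k:ℝ)) * Real.cos ((k:ℝ)*(t - zetaPt n j)))
          + Real.pi * (((k:ℝ)/((k:ℝ)^2-4)) * Real.cos ((k:ℝ)*(t - zetaPt n j))) := by
      intro k hk
      rw [JC_ge3 k (Finset.mem_Icc.1 hk).1]
      ring
    rw [Finset.sum_congr rfl step, Finset.sum_add_distrib, ← Finset.mul_sum, ← Finset.mul_sum]
  simp only [Wweight, Rweight, hicc, Finset.sum_insert h1m, Finset.sum_insert h2m, JC_1, h2v,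
    hsum, Nat.cast_one, Nat.cast_ofNat, one_mul]
  field_simp
  ring
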